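/- arXiv:2605.23299 — 2 statements merged into one kernel-verified Lean document; each statement's English description precedes it below -/
import Mathlib

section
/- Let x_1 < ... < x_{n+1} be nodes in [-1,1] with x_{n+1} < 1. Then the Lebesgue function λ_n is convex on the interval [x_{n+1}, 1]. -/
open Finset

lemma prod_shift_convex (s₀ : ℝ) (a : ι → ℝ) (S : Finset ι) (ha : ∀ k ∈ S, a k ≤ s₀) :
    ConvexOn ℝ (Set.Icc s₀ 1) (fun t : ℝ => ∏ k ∈ S, (t - a k)) ∧
    (∀ t ∈ Set.Icc s₀ 1, 0 ≤ ∏ k ∈ S, (t - a k)) ∧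
    MonotoneOn (fun t : ℝ => ∏ k ∈ S, (t - a k)) (Set.Icc s₀ 1) := by
  classical
  induction S using Finset.induction with
  | empty =>
    simp only [Finset.prod_empty]
    exact ⟨convexOn_const 1 (convex_Icc _ _), fun t _ => zero_le_one, monotoneOn_const⟩
  | insert _ _ hnot ih =>
    rename_i c S'
    obtain ⟨hc1, hc2, hc3⟩ := ih (fun k hk => ha k (Finset.mem_insert_of_mem hk))
    have hac : a c ≤ s₀ := ha c (Finset.mem_insert_self _ _)
    have hlin : ConvexOn ℝ (Set.Icc s₀ 1) (fun t : ℝ => t - a c) :=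
      ((convexOn_id (convex_Icc s₀ 1)).add (convexOn_const _ (convex_Icc _ _)))
    have hlin0 : ∀ t ∈ Set.Icc s₀ 1, (0:ℝ) ≤ t - a c := fun t ht =>
      sub_nonneg.2 (hac.trans ht.1)
    have hlinm : MonotoneOn (fun t : ℝ => t - a c) (Set.Icc s₀ 1) :=
      fun u _ v _ huv => by simpa using huv
    have key : (fun t : ℝ => ∏ k ∈ insert c S', (t - a k)) =
        (fun t : ℝ => t - a c) * (fun t : ℝ => ∏ k ∈ S', (t - a k)) := by
      funext t; simp [Finset.prod_insert hnot]
    refine ⟨key ▸ hlin.mul hc1 hlin0 hc2 (hlinm.monovaryOn hc3), ?_, ?_⟩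
    · intro t ht
      rw [Finset.prod_insert hnot]
      exact mul_nonneg (hlin0 t ht) (hc2 t ht)
    · intro u hu v hv huv
      simp only [Finset.prod_insert hnot]
      exact mul_le_mul (hlinm hu hv huv) (hc3 hu hv huv) (hc2 u hu) (hlin0 v hv)

/-- If the largest node satisfies `x (last n) < 1`, the Lebesgue function is
convex on `[x (last n), 1]`. -/
theorem lebesgue_function_convexOn_right (n : ℕ) (x : Fin (n + 1) → ℝ)
    (hx : StrictMono x) (hxI : ∀ j, x j ∈ Set.Icc (-1 : ℝ) 1)
    (hlt : x (Fin.last n) < 1) :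
    ConvexOn ℝ (Set.Icc (x (Fin.last n)) 1)
      (fun t : ℝ => ∑ j, |∏ k ∈ Finset.univ.erase j, (t - x k) / (x j - x k)|) := by
  classical
  set s₀ := x (Fin.last n)
  have hxle : ∀ k, x k ≤ s₀ := fun k => hx.monotone (Fin.le_last k)
  -- rewrite each term on the set
  have key : ∀ t ∈ Set.Icc s₀ 1, ∀ j : Fin (n+1),
      |∏ k ∈ Finset.univ.erase j, (t - x k) / (x j - x k)| =
      (∏ k ∈ Finset.univ.erase j, |x j - x k|⁻¹) * ∏ k ∈ Finset.univ.erase j, (t - x k) := by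
    intro t ht j
    rw [Finset.abs_prod, ← Finset.prod_mul_distrib]
    refine Finset.prod_congr rfl fun k hk => ?_
    rw [abs_div, abs_of_nonneg (sub_nonneg.2 ((hxle k).trans ht.1))]
    ring
  have main : ConvexOn ℝ (Set.Icc s₀ 1)
      (fun t : ℝ => ∑ j, (∏ k ∈ Finset.univ.erase j, |x j - x k|⁻¹) *
        ∏ k ∈ Finset.univ.erase j, (t - x k)) := by
    have := fun j : Fin (n+1) => (prod_shift_convex s₀ x (Finset.univ.erase j)
      (fun k _ => hxle k)).1
    have : ∀ j : Fin (n+1), ConvexOn ℝ (Set.Icc s₀ 1)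
        (fun t : ℝ => (∏ k ∈ Finset.univ.erase j, |x j - x k|⁻¹) *
          ∏ k ∈ Finset.univ.erase j, (t - x k)) := fun j =>
      (this j).smul (Finset.prod_nonneg fun k _ => inv_nonneg.2 (abs_nonneg _))
    -- sum over finset
    have hsum : ∀ (T : Finset (Fin (n+1))), ConvexOn ℝ (Set.Icc s₀ 1)
        (fun t : ℝ => ∑ j ∈ T, (∏ k ∈ Finset.univ.erase j, |x j - x k|⁻¹) *
          ∏ k ∈ Finset.univ.erase j, (t - x k)) := by
      intro T
      induction T using Finset.induction with
      | empty => simpa using convexOn_const 0 (convex_Icc _ _)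
      | insert _ _ hnot ih =>
        rename_i c T'
        simp only [Finset.sum_insert hnot]
        exact (this c).add ih
    exact hsum Finset.univ
  refine ⟨convex_Icc _ _, fun u hu v hv a b ha hb hab => ?_⟩
  have huv : a • u + b • v ∈ Set.Icc s₀ 1 := (convex_Icc s₀ 1) hu hv ha hb hab
  have e1 : ∀ w ∈ Set.Icc s₀ 1,
      (∑ j, |∏ k ∈ Finset.univ.erase j, (w - x k) / (x j - x k)|) =
      ∑ j, (∏ k ∈ Finset.univ.erase j, |x j - x k|⁻¹) *
        ∏ k ∈ Finset.univ.erase j, (w - x k) := fun w hw =>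
    Finset.sum_congr rfl fun j _ => key w hw j
  simp only
  rw [e1 _ huv, e1 _ hu, e1 _ hv]
  exact main.2 hu hv ha hb hab
end

section
/- Taylor-Markov bound at the left endpoint: let p be a real polynomial of degree at most n with p(x_1) = 1 for some x_1 ∈ (-1, 1]. Then p(-1) ≤ 1 + ‖p‖_{[-1,1]} · (exp(n²(1 + x_1)) − 1). -/
open Polynomial Finset Real
open Polynomial.Chebyshev

lemma natDegree_T_le : ∀ n : ℕ, (T ℝ (n : ℤ)).natDegree ≤ n := by
  intro n
  induction n using Nat.twoStepInduction with
  | zero => simp [T_zero]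
  | one => simp [T_one]
  | more n ih1 ih2 =>
    have h : ((n + 2 : ℕ) : ℤ) = (n : ℤ) + 2 := by push_cast; ring
    rw [h, T_add_two]
    refine (natDegree_sub_le _ _).trans (max_le ?_ (ih1.trans (by omega)))
    calc (2 * X * T ℝ ((n:ℤ) + 1)).natDegree
        ≤ (2 * X : ℝ[X]).natDegree + (T ℝ ((n:ℤ)+1)).natDegree := natDegree_mul_le
      _ ≤ 1 + (n + 1) := by
          have h1 : ((n : ℤ) + 1) = ((n + 1 : ℕ) : ℤ) := by push_cast; ring
          have h2 : (2 * X : ℝ[X]).natDegree ≤ 1 :=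
            natDegree_mul_le.trans (by simp)
          rw [h1] at *
          exact add_le_add h2 ih2
      _ ≤ n + 2 := by omega

lemma T_ode (n : ℤ) : (1 - X ^ 2 : ℝ[X]) * derivative (derivative (T ℝ n)) =
    X * derivative (T ℝ n) - (n : ℝ[X]) ^ 2 * T ℝ n := by
  have E1 := congr_arg derivative (one_sub_X_sq_mul_derivative_T_eq_poly_in_T (R := ℝ) (n - 1))
  simp only [derivative_mul, derivative_sub, derivative_one, derivative_X_pow, derivative_X,
    derivative_intCast, derivative_add, derivative_one, C_eq_natCast, sub_add_cancel] at E1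
  have E2 := T_derivative_eq_U (R := ℝ) n
  have E3 := T_derivative_eq_U (R := ℝ) (n - 1)
  have E4 := T_eq_U_sub_X_mul_U ℝ n
  have E5 := U_eq ℝ n
  linear_combination (norm := (push_cast; ring_nf))
    E1 + (1 - (n : ℝ[X])) * X * E2 + (n : ℝ[X]) * E3
      + (n : ℝ[X]) * ((n : ℝ[X]) - 1) * (E4 + E5)

lemma T_ode_iter (n : ℤ) : ∀ j : ℕ,
    (1 - X ^ 2 : ℝ[X]) * derivative^[j + 2] (T ℝ n) =
      (2 * (j : ℝ[X]) + 1) * (X * derivative^[j + 1] (T ℝ n))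
        - ((n : ℝ[X]) ^ 2 - (j : ℝ[X]) ^ 2) * derivative^[j] (T ℝ n) := by
  intro j
  induction j with
  | zero => simpa using T_ode n
  | succ j ih =>
    have h := congr_arg derivative ih
    simp only [derivative_mul, derivative_sub, derivative_add, derivative_one, derivative_X_pow,
      derivative_X, derivative_natCast, derivative_intCast, C_eq_natCast,
      ← Function.iterate_succ_apply' derivative] at h
    simp only [Nat.succ_eq_add_one, derivative_ofNat, derivative_pow, derivative_natCast,
      derivative_intCast, mul_zero, zero_mul, add_zero, zero_add] at h
    simp only [show j + 1 + 1 = j + 2 from rfl, show j + 2 + 1 = j + 3 from rfl] at h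
    simp only [show j + 1 + 2 = j + 3 from rfl, show j + 1 + 1 = j + 2 from rfl]
    linear_combination (norm := (push_cast; ring_nf)) h

lemma T_deriv_eval_rec (n : ℤ) (j : ℕ) :
    (2 * (j : ℝ) + 1) * (derivative^[j + 1] (T ℝ n)).eval (-1)
      = -(((n : ℝ) ^ 2 - (j : ℝ) ^ 2) * (derivative^[j] (T ℝ n)).eval (-1)) := by
  have h := congr_arg (eval (-1 : ℝ)) (T_ode_iter n j)
  simp only [eval_mul, eval_sub, eval_add, eval_one, eval_pow, eval_X, eval_natCast,
    eval_intCast, eval_ofNat] at h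
  norm_num at h
  rw [Function.iterate_succ_apply]
  linarith

lemma abs_T_deriv_eval_le (n : ℕ) (hn : 1 ≤ n) : ∀ j : ℕ,
    |(derivative^[j] (T ℝ (n : ℤ))).eval (-1)| ≤ (n : ℝ) ^ (2 * j) := by
  intro j
  induction j with
  | zero =>
    have : ((-1 : ℝ)) = Real.cos π := by rw [Real.cos_pi]
    simp only [Function.iterate_zero, id_eq, pow_zero, this, T_real_cos]
    exact abs_cos_le_one _
  | succ j ih =>
    by_cases hj : j < n
    · have h := T_deriv_eval_rec (n : ℤ) j
      have h1 : (0:ℝ) ≤ (n:ℝ)^2 - (j:ℝ)^2 := by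
        have : (j:ℝ) ≤ (n:ℝ) := by exact_mod_cast hj.le
        nlinarith [Nat.cast_nonneg (α := ℝ) j]
      push_cast at h
      have h2 : (1:ℝ) ≤ 2 * (j:ℝ) + 1 := by
        have := Nat.cast_nonneg (α := ℝ) j; linarith
      have h3 : |(derivative^[j + 1] (T ℝ (n:ℤ))).eval (-1)|
          ≤ ((n:ℝ)^2 - (j:ℝ)^2) * |(derivative^[j] (T ℝ (n:ℤ))).eval (-1)| := by
        have := abs_eq_abs.mpr (Or.inl h)
        rw [abs_mul, abs_neg, abs_mul, abs_of_nonneg h1,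
          abs_of_nonneg (by linarith : (0:ℝ) ≤ 2 * (j:ℝ) + 1)] at this
        nlinarith [abs_nonneg ((derivative^[j + 1] (T ℝ (n:ℤ))).eval (-1))]
      have h4 : ((n:ℝ)^2 - (j:ℝ)^2) * |(derivative^[j] (T ℝ (n:ℤ))).eval (-1)|
          ≤ (n:ℝ)^2 * (n:ℝ)^(2*j) := by
        apply mul_le_mul _ ih (abs_nonneg _) (by positivity)
        nlinarith [sq_nonneg (j:ℝ)]
      calc |(derivative^[j+1] (T ℝ (n:ℤ))).eval (-1)|
          ≤ (n:ℝ)^2 * (n:ℝ)^(2*j) := h3.trans h4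
        _ = (n:ℝ) ^ (2 * (j+1)) := by rw [← pow_add]; ring_nf
    · have hd : derivative^[j + 1] (T ℝ (n : ℤ)) = 0 := by
        apply iterate_derivative_eq_zero
        exact lt_of_le_of_lt (natDegree_T_le n) (by omega)
      simp only [hd, eval_zero, abs_zero]
      positivity

lemma iterate_derivative_linear_mul (r : ℝ) (q : ℝ[X]) : ∀ j : ℕ,
    derivative^[j + 1] ((X - C r) * q) =
      (X - C r) * derivative^[j + 1] q + C ((j : ℝ) + 1) * derivative^[j] q := by
  intro j
  induction j with
  | zero =>
    simp only [zero_add, Function.iterate_one, Function.iterate_zero, id_eq, Nat.cast_zero,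
      map_one, derivative_mul, derivative_sub, derivative_X, derivative_C,
      sub_zero, one_mul]
    ring
  | succ j ih =>
    have h := congr_arg derivative ih
    simp only [derivative_add, derivative_mul, derivative_sub, derivative_X, derivative_C,
      sub_zero, one_mul, Nat.succ_eq_add_one,
      ← Function.iterate_succ_apply' derivative] at h
    rw [h]
    simp only [C_add, C_1, Nat.cast_add, Nat.cast_one]
    ring

lemma sign_prod_deriv (t : Finset ℕ) (a : ℕ → ℝ) (ha : ∀ i ∈ t, -1 ≤ a i) :
    ∀ j : ℕ, 0 ≤ (-1 : ℝ) ^ (t.card + j) *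
      (derivative^[j] (∏ i ∈ t, (X - C (a i)))).eval (-1) := by
  classical
  induction t using Finset.induction_on with
  | empty =>
    intro j
    cases j with
    | zero => simp
    | succ j => simp [Function.iterate_succ_apply]
  | @insert b t hb ih =>
    intro j
    have hab : -1 ≤ a b := ha b (Finset.mem_insert_self b t)
    have hat : ∀ i ∈ t, -1 ≤ a i := fun i hi => ha i (Finset.mem_insert_of_mem hi)
    rw [Finset.prod_insert hb, Finset.card_insert_of_notMem hb]
    cases j with
    | zero =>
      simp only [Function.iterate_zero, id_eq, eval_mul, eval_sub, eval_X, eval_C]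
      have key : (-1 : ℝ) ^ (t.card + 1 + 0) * ((-1 - a b) * (∏ i ∈ t, (X - C (a i))).eval (-1))
          = (1 + a b) * ((-1 : ℝ) ^ (t.card + 0) * (∏ i ∈ t, (X - C (a i))).eval (-1)) := by
        ring
      rw [key]
      exact mul_nonneg (by linarith) (by simpa using ih hat 0)
    | succ j =>
      rw [iterate_derivative_linear_mul]
      simp only [eval_add, eval_mul, eval_sub, eval_X, eval_C]
      have key : (-1 : ℝ) ^ (t.card + 1 + (j + 1)) *
            ((-1 - a b) * (derivative^[j+1] (∏ i ∈ t, (X - C (a i)))).eval (-1)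
              + ((j : ℝ) + 1) * (derivative^[j] (∏ i ∈ t, (X - C (a i)))).eval (-1))
          = (1 + a b) * ((-1 : ℝ) ^ (t.card + (j + 1)) *
              (derivative^[j+1] (∏ i ∈ t, (X - C (a i)))).eval (-1))
            + ((j : ℝ) + 1) * ((-1 : ℝ) ^ (t.card + j) *
              (derivative^[j] (∏ i ∈ t, (X - C (a i)))).eval (-1)) := by
        ring
      rw [key]
      have hj1 : (0:ℝ) ≤ (j : ℝ) + 1 := by positivity
      exact add_nonneg (mul_nonneg (by linarith) (ih hat (j+1)))
        (mul_nonneg hj1 (ih hat j))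

lemma endpoint_deriv_bound (n : ℕ) (hn : 1 ≤ n) (p : ℝ[X]) (hp : p.natDegree ≤ n)
    (M : ℝ) (hM : ∀ x ∈ Set.Icc (-1:ℝ) 1, |p.eval x| ≤ M) (j : ℕ) :
    |(derivative^[j] p).eval (-1)| ≤ M * (n : ℝ) ^ (2 * j) := by
  classical
  have hn0 : (n : ℝ) ≠ 0 := by positivity
  set v : ℕ → ℝ := fun k => Real.cos (k * π / n) with hv
  set s : Finset ℕ := Finset.range (n + 1) with hs
  have hM0 : 0 ≤ M := le_trans (abs_nonneg _) (hM 0 (by norm_num))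
  -- nodes in [-1,1]
  have hmem : ∀ k, v k ∈ Set.Icc (-1:ℝ) 1 :=
    fun k => ⟨Real.neg_one_le_cos _, Real.cos_le_one _⟩
  -- strict anti
  have hanti : ∀ k l : ℕ, l ∈ s → k < l → v l < v k := by
    intro k l hl hkl
    have hl' : l ≤ n := by simpa [hs, Nat.lt_succ_iff] using hl
    apply Real.cos_lt_cos_of_nonneg_of_le_pi
    · positivity
    · rw [div_le_iff₀ (by positivity : (0:ℝ) < (n:ℝ))]
      have : (l : ℝ) ≤ n := by exact_mod_cast hl'
      nlinarith [Real.pi_pos]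
    · have h1 : (k : ℝ) < l := by exact_mod_cast hkl
      have hπ := Real.pi_pos
      apply (div_lt_div_iff_of_pos_right (by positivity : (0:ℝ) < (n:ℝ))).mpr
      nlinarith
  -- injectivity
  have hinj : Set.InjOn v s := by
    intro k hk l hl hkl
    by_contra hne
    rcases Nat.lt_or_ge k l with h | h
    · exact absurd hkl (ne_of_gt (hanti k l hl h))
    · have h' : l < k := lt_of_le_of_ne h (Ne.symm hne)
      exact absurd hkl.symm (ne_of_gt (hanti l k hk h'))
  -- Chebyshev values at nodes
  have hT : ∀ k ∈ s, (T ℝ (n:ℤ)).eval (v k) = (-1 : ℝ) ^ k := by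
    intro k hk
    have : (T ℝ (n:ℤ)).eval (Real.cos ((k : ℝ) * π / n)) =
        Real.cos (((n:ℤ) : ℝ) * ((k : ℝ) * π / n)) := T_real_cos _ _
    rw [hv, this]
    have harg : (((n:ℤ) : ℝ)) * ((k : ℝ) * π / n) = (k : ℝ) * π := by
      field_simp
      push_cast; ring
    rw [harg]
    have := Real.cos_nat_mul_pi_sub 0 k
    simpa using this
  -- degrees
  have hcard : s.card = n + 1 := by simp [hs]
  have hdegp : p.degree < s.card := by
    apply lt_of_le_of_lt (Polynomial.degree_le_natDegree)
    rw [hcard]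
    exact_mod_cast Nat.lt_succ_of_le hp
  have hdegT : (T ℝ (n:ℤ)).degree < s.card := by
    apply lt_of_le_of_lt (Polynomial.degree_le_natDegree)
    rw [hcard]
    exact_mod_cast Nat.lt_succ_of_le (natDegree_T_le n)
  -- basis decomposition
  set c : ℕ → ℝ := fun k => ∏ i ∈ s.erase k, (v k - v i)⁻¹ with hc
  set q : ℕ → ℝ[X] := fun k => ∏ i ∈ s.erase k, (X - C (v i)) with hq
  have hbasis : ∀ k, Lagrange.basis s v k = C (c k) * q k := by
    intro k
    rw [Lagrange.basis, hc, hq]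
    simp only [Lagrange.basisDivisor]
    rw [Finset.prod_mul_distrib, map_prod]
  -- sign of c
  have hsignc : ∀ k ∈ s, 0 ≤ (-1 : ℝ) ^ k * c k := by
    intro k hk
    have hkn : k ≤ n := by simpa [hs, Nat.lt_succ_iff] using hk
    have hsplit := Finset.prod_filter_mul_prod_filter_not (s.erase k) (· < k)
      (fun i => (v k - v i)⁻¹)
    have hA : (s.erase k).filter (· < k) = Finset.range k := by
      ext i
      simp only [Finset.mem_filter, Finset.mem_erase, Finset.mem_range, hs]
      omega
    rw [hA] at hsplit
    have h1 : (-1 : ℝ) ^ k * ∏ i ∈ Finset.range k, (v k - v i)⁻¹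
        = ∏ i ∈ Finset.range k, (-(v k - v i)⁻¹) := by
      rw [show ((-1:ℝ)^k) = ∏ _i ∈ Finset.range k, (-1:ℝ) by simp, ← Finset.prod_mul_distrib]
      exact Finset.prod_congr rfl fun i _ => by ring
    have h2 : 0 ≤ ∏ i ∈ Finset.range k, (-(v k - v i)⁻¹) := by
      apply Finset.prod_nonneg
      intro i hi
      have hik : i < k := Finset.mem_range.mp hi
      have : v k < v i := hanti i k hk hik
      have : v k - v i < 0 := by linarith
      have := inv_lt_zero.mpr this
      linarith
    have h3 : 0 ≤ ∏ i ∈ (s.erase k).filter (fun i => ¬ i < k), (v k - v i)⁻¹ := by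
      apply Finset.prod_nonneg
      intro i hi
      simp only [Finset.mem_filter, Finset.mem_erase] at hi
      have hki : k < i := by omega
      have : v i < v k := hanti k i hi.1.2 hki
      have : 0 < v k - v i := by linarith
      positivity
    calc (0:ℝ) ≤ (∏ i ∈ Finset.range k, (-(v k - v i)⁻¹)) *
          ∏ i ∈ (s.erase k).filter (fun i => ¬ i < k), (v k - v i)⁻¹ :=
        mul_nonneg h2 h3
      _ = (-1 : ℝ) ^ k * c k := by rw [← h1, hc]; rw [mul_assoc, hsplit]
  -- sign of derivatives of basis at -1
  have hcarde : ∀ k ∈ s, (s.erase k).card = n := by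
    intro k hk
    rw [Finset.card_erase_of_mem hk, hcard]
    omega
  have hsignb : ∀ k ∈ s,
      0 ≤ (-1 : ℝ) ^ (n + j + k) * (derivative^[j] (Lagrange.basis s v k)).eval (-1) := by
    intro k hk
    rw [hbasis k, iterate_derivative_C_mul, eval_mul, eval_C]
    have hq' := sign_prod_deriv (s.erase k) (fun i => v i)
      (fun i _ => (hmem i).1) j
    rw [hcarde k hk] at hq'
    have key : (-1 : ℝ) ^ (n + j + k) * (c k * (derivative^[j] (q k)).eval (-1))
        = ((-1 : ℝ) ^ k * c k) * ((-1 : ℝ) ^ (n + j) * (derivative^[j] (q k)).eval (-1)) := by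
      ring
    rw [key]
    exact mul_nonneg (hsignc k hk) hq'
  -- interpolation identities
  have hpint : p = Lagrange.interpolate s v (fun i => p.eval (v i)) :=
    Lagrange.eq_interpolate hinj hdegp
  have hTint : T ℝ (n:ℤ) = Lagrange.interpolate s v (fun i => (-1:ℝ) ^ i) :=
    Lagrange.eq_interpolate_of_eval_eq (r := fun i => (-1:ℝ) ^ i) hinj hdegT hT
  have hexp : ∀ r : ℕ → ℝ, (derivative^[j] (Lagrange.interpolate s v r)).eval (-1)
      = ∑ k ∈ s, r k * (derivative^[j] (Lagrange.basis s v k)).eval (-1) := by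
    intro r
    rw [Lagrange.interpolate_apply, iterate_derivative_sum, eval_finset_sum]
    exact Finset.sum_congr rfl fun k _ => by rw [iterate_derivative_C_mul, eval_mul, eval_C]
  set b : ℕ → ℝ := fun k => (derivative^[j] (Lagrange.basis s v k)).eval (-1) with hb
  have habs : ∀ k ∈ s, |b k| = (-1:ℝ) ^ (n + j + k) * b k := by
    intro k hk
    have h1 : |(-1:ℝ) ^ (n + j + k) * b k| = |b k| := by
      rw [abs_mul, abs_pow, abs_neg, abs_one, one_pow, one_mul]
    rw [← h1, abs_of_nonneg (hsignb k hk)]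
  have h0 : (derivative^[j] p).eval (-1) = ∑ k ∈ s, p.eval (v k) * b k := by
    have := hexp (fun i => p.eval (v i))
    rw [← hpint] at this
    exact this
  have hTsum : (derivative^[j] (T ℝ (n:ℤ))).eval (-1) = ∑ k ∈ s, (-1:ℝ) ^ k * b k := by
    have := hexp (fun i => (-1:ℝ) ^ i)
    rw [← hTint] at this
    exact this
  calc |(derivative^[j] p).eval (-1)| = |∑ k ∈ s, p.eval (v k) * b k| := by rw [h0]
    _ ≤ ∑ k ∈ s, |p.eval (v k) * b k| := Finset.abs_sum_le_sum_abs _ _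
    _ ≤ ∑ k ∈ s, M * |b k| := by
        apply Finset.sum_le_sum
        intro k hk
        rw [abs_mul]
        exact mul_le_mul_of_nonneg_right (hM (v k) (hmem k)) (abs_nonneg _)
    _ = M * ((-1:ℝ) ^ (n + j) * ∑ k ∈ s, (-1:ℝ) ^ k * b k) := by
        have hsum : ∑ k ∈ s, |b k| = (-1:ℝ) ^ (n + j) * ∑ k ∈ s, (-1:ℝ) ^ k * b k := by
          rw [Finset.mul_sum]
          apply Finset.sum_congr rfl
          intro k hk
          rw [habs k hk, pow_add]
          ring
        rw [← Finset.mul_sum, hsum]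
    _ ≤ M * |(derivative^[j] (T ℝ (n:ℤ))).eval (-1)| := by
        apply mul_le_mul_of_nonneg_left _ hM0
        rw [hTsum]
        calc (-1:ℝ) ^ (n + j) * ∑ k ∈ s, (-1:ℝ) ^ k * b k
            ≤ |(-1:ℝ) ^ (n + j) * ∑ k ∈ s, (-1:ℝ) ^ k * b k| := le_abs_self _
          _ = |∑ k ∈ s, (-1:ℝ) ^ k * b k| := by
              rw [abs_mul, abs_pow, abs_neg, abs_one, one_pow, one_mul]
    _ ≤ M * (n:ℝ) ^ (2 * j) :=
        mul_le_mul_of_nonneg_left (abs_T_deriv_eval_le n hn j) hM0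

/-- Taylor–Markov bound at the left endpoint: if `p` has degree at most `n` and
`p x₁ = 1` for some `x₁ ∈ (-1, 1]`, then
`p(-1) ≤ 1 + ‖p‖_{[-1,1]} (exp(n²(1+x₁)) - 1)`. -/
theorem taylor_markov_left_endpoint (n : ℕ) (hn : 1 ≤ n) (p : Polynomial ℝ)
    (hp : p.natDegree ≤ n) (x₁ : ℝ) (hx₁ : x₁ ∈ Set.Ioc (-1 : ℝ) 1)
    (hpx₁ : p.eval x₁ = 1) :
    p.eval (-1) ≤ 1 +
      sSup ((fun s : ℝ => |p.eval s|) '' Set.Icc (-1 : ℝ) 1) *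
        (Real.exp ((n : ℝ) ^ 2 * (1 + x₁)) - 1) := by
  obtain ⟨hx₁l, hx₁r⟩ := hx₁
  set M := sSup ((fun s : ℝ => |p.eval s|) '' Set.Icc (-1 : ℝ) 1) with hMdef
  have hcont : Continuous fun s : ℝ => |p.eval s| := (Polynomial.continuous p).abs
  have hbdd : BddAbove ((fun s : ℝ => |p.eval s|) '' Set.Icc (-1 : ℝ) 1) :=
    (isCompact_Icc.image hcont).bddAbove
  have hM : ∀ x ∈ Set.Icc (-1:ℝ) 1, |p.eval x| ≤ M := fun x hx =>
    le_csSup hbdd ⟨x, hx, rfl⟩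
  have hM0 : 0 ≤ M := le_trans (abs_nonneg _) (hM 0 (by norm_num))
  set N := p.natDegree with hN
  set δ : ℝ := 1 + x₁ with hδ
  have hδ0 : 0 < δ := by rw [hδ]; linarith
  set t : ℝ := (n:ℝ)^2 * δ with ht
  have ht0 : 0 ≤ t := by positivity
  set qq := Polynomial.taylor (-1:ℝ) p with hqq
  -- coefficient bounds
  have hcoeff : ∀ i : ℕ, |qq.coeff i| * (i.factorial : ℝ) ≤ M * (n : ℝ) ^ (2 * i) := by
    intro i
    have hfact := congr_fun (Polynomial.factorial_smul_hasseDeriv (R := ℝ) i) p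
    simp only [LinearMap.smul_apply] at hfact
    have h3 : ((i.factorial : ℕ) : ℝ) * (Polynomial.hasseDeriv i p).eval (-1)
        = (derivative^[i] p).eval (-1) := by
      rw [← hfact, nsmul_eq_mul, eval_mul, eval_natCast]
    have h4 : |qq.coeff i| * (i.factorial : ℝ) = |(derivative^[i] p).eval (-1)| := by
      rw [hqq, Polynomial.taylor_coeff, ← h3, abs_mul, abs_of_nonneg
        (by positivity : (0:ℝ) ≤ ((i.factorial : ℕ) : ℝ))]
      ring
    rw [h4]
    exact endpoint_deriv_bound n hn p hp M hM i
  -- Taylor expansion at -1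
  have heval : (1:ℝ) = ∑ i ∈ Finset.range (N + 1), qq.coeff i * δ ^ i := by
    have h1 : qq.eval δ = p.eval x₁ := by
      rw [hqq, Polynomial.taylor_eval]
      congr 1
      rw [hδ]; ring
    have h2 := Polynomial.eval_eq_sum_range (p := qq) (x := δ)
    rw [Polynomial.natDegree_taylor] at h2
    rw [← hpx₁, ← h1, h2]
  rw [Finset.sum_range_succ'] at heval
  simp only [pow_zero, mul_one] at heval
  have hc0 : qq.coeff 0 = p.eval (-1) := by
    rw [hqq]; exact Polynomial.taylor_coeff_zero (-1) p
  rw [hc0] at heval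
  -- heval : 1 = ∑ i in range N, qq.coeff (i+1) * δ^(i+1) + p.eval (-1)
  have hsum_le : ∑ i ∈ Finset.range N, |qq.coeff (i+1) * δ ^ (i+1)|
      ≤ M * (Real.exp t - 1) := by
    have hterm : ∀ i ∈ Finset.range N, |qq.coeff (i+1) * δ ^ (i+1)|
        ≤ M * (t ^ (i+1) / ((i+1).factorial : ℝ)) := by
      intro i _
      have hf : (0:ℝ) < (((i+1).factorial : ℕ) : ℝ) := by positivity
      have h5 : |qq.coeff (i+1)| * δ ^ (i+1) * (((i+1).factorial : ℕ) : ℝ)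
          ≤ M * t ^ (i+1) := by
        have h6 := mul_le_mul_of_nonneg_right (hcoeff (i+1))
          (pow_nonneg hδ0.le (i+1))
        calc |qq.coeff (i+1)| * δ ^ (i+1) * (((i+1).factorial : ℕ) : ℝ)
            = |qq.coeff (i+1)| * (((i+1).factorial : ℕ) : ℝ) * δ ^ (i+1) := by ring
          _ ≤ M * (n:ℝ) ^ (2 * (i+1)) * δ ^ (i+1) := h6
          _ = M * t ^ (i+1) := by
              rw [ht, mul_pow, ← pow_mul]
              ring
      rw [abs_mul, abs_pow, abs_of_pos hδ0]
      rw [mul_div_assoc'] at *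
      rw [le_div_iff₀ hf]
      calc |qq.coeff (i+1)| * δ ^ (i+1) * (((i+1).factorial : ℕ) : ℝ)
          ≤ M * t ^ (i+1) := h5
        _ = M * t ^ (i+1) := rfl
    calc ∑ i ∈ Finset.range N, |qq.coeff (i+1) * δ ^ (i+1)|
        ≤ ∑ i ∈ Finset.range N, M * (t ^ (i+1) / ((i+1).factorial : ℝ)) :=
          Finset.sum_le_sum hterm
      _ = M * ∑ i ∈ Finset.range N, t ^ (i+1) / ((i+1).factorial : ℝ) := by
          rw [Finset.mul_sum]
      _ ≤ M * (Real.exp t - 1) := by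
          apply mul_le_mul_of_nonneg_left _ hM0
          have hexp := Real.sum_le_exp_of_nonneg ht0 (N + 1)
          rw [Finset.sum_range_succ'] at hexp
          simp only [pow_zero, Nat.factorial_zero, Nat.cast_one, div_one] at hexp
          linarith
  have habs : -(∑ i ∈ Finset.range N, qq.coeff (i+1) * δ ^ (i+1))
      ≤ ∑ i ∈ Finset.range N, |qq.coeff (i+1) * δ ^ (i+1)| := by
    calc -(∑ i ∈ Finset.range N, qq.coeff (i+1) * δ ^ (i+1))
        ≤ |∑ i ∈ Finset.range N, qq.coeff (i+1) * δ ^ (i+1)| := neg_le_abs _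
      _ ≤ _ := Finset.abs_sum_le_sum_abs _ _
  have hfin : p.eval (-1) = 1 - ∑ i ∈ Finset.range N, qq.coeff (i+1) * δ ^ (i+1) := by
    linarith [heval]
  rw [hfin]
  have : Real.exp ((n : ℝ) ^ 2 * (1 + x₁)) = Real.exp t := by rw [ht, hδ]
  rw [this]
  linarith
end
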